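/- arXiv:1708.06650 — 5 statements merged into one kernel-verified Lean document; each statement's English description precedes it below -/
import Mathlib

section
/- For integers q ≥ 3 and 1 ≤ z < q-1 and any positive integer x, one has ((q-z)/⌊(q-1)/(q-z)⌋)^x > ((q-z-1)/⌊(q-1)/(q-z-1)⌋)^x, where the quantities are real numbers. -/
theorem rate_monotone (q z : ℤ) (x : ℕ) (hq : 3 ≤ q) (hz : 1 ≤ z) (hzq : z < q - 1)
    (hx : 1 ≤ x) :
    ((q - z : ℝ) / (((q - 1) / (q - z) : ℤ) : ℝ)) ^ x >
      ((q - z - 1 : ℝ) / (((q - 1) / (q - z - 1) : ℤ) : ℝ)) ^ x := by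
  have hfa1 : (1:ℤ) ≤ (q-1)/(q-z) := by
    rw [Int.le_ediv_iff_mul_le (by omega)]; omega
  have hfb1 : (1:ℤ) ≤ (q-1)/(q-z-1) := by
    rw [Int.le_ediv_iff_mul_le (by omega)]; omega
  have hmul := Int.ediv_mul_le (q-1) (show (q-z) ≠ 0 by omega)
  have hmono : (q-1)/(q-z) ≤ (q-1)/(q-z-1) := by
    rw [Int.le_ediv_iff_mul_le (by omega)]
    nlinarith [hfa1]
  have hfa1' : (1:ℝ) ≤ (((q-1)/(q-z) : ℤ) : ℝ) := by exact_mod_cast hfa1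
  have hfb1' : (1:ℝ) ≤ (((q-1)/(q-z-1) : ℤ) : ℝ) := by exact_mod_cast hfb1
  have hmono' : (((q-1)/(q-z) : ℤ) : ℝ) ≤ (((q-1)/(q-z-1) : ℤ) : ℝ) := by
    exact_mod_cast hmono
  have hz' : (z:ℝ) + 1 < q := by exact_mod_cast (by omega : z + 1 < q)
  have hbase : ((q - z - 1 : ℝ) / (((q - 1) / (q - z - 1) : ℤ) : ℝ)) <
      ((q - z : ℝ) / (((q - 1) / (q - z) : ℤ) : ℝ)) := by
    rw [div_lt_div_iff₀ (by linarith) (by linarith)]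
    nlinarith
  have hnn : (0:ℝ) ≤ ((q - z - 1 : ℝ) / (((q - 1) / (q - z - 1) : ℤ) : ℝ)) := by
    apply div_nonneg <;> linarith
  exact pow_lt_pow_left₀ hbase hnn (by omega)
end

section
/- Let q, z, t be positive integers with 1 ≤ z ≤ q-2 and t ≥ 1. Then (⌊(q-1)/(q-z)⌋^t + ⌊(q-1)/(q-z-1)⌋^t) / ((q-1)^t + 1) < 1/(q-z)^t + 1/(q-z-1)^t, as real numbers. -/
theorem packet_ratio_bound' (q z : ℤ) (t : ℕ) (hz : 1 ≤ z) (hzq : z ≤ q - 2) (ht : 1 ≤ t) :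
    (((((q - 1) / (q - z) : ℤ) : ℝ)) ^ t + ((((q - 1) / (q - z - 1) : ℤ) : ℝ)) ^ t) /
        ((q - 1 : ℝ) ^ t + 1) <
      1 / (q - z : ℝ) ^ t + 1 / (q - z - 1 : ℝ) ^ t := by
  have hA : (2 : ℤ) ≤ q - z := by linarith
  have hB : (1 : ℤ) ≤ q - z - 1 := by linarith
  have hq : (2 : ℤ) ≤ q - 1 := by linarith
  have hra : (0 : ℝ) < (q : ℝ) - z := by
    have : ((2:ℤ):ℝ) ≤ ((q - z : ℤ):ℝ) := by exact_mod_cast hA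
    push_cast at this
    linarith
  have hrb : (0 : ℝ) < (q : ℝ) - z - 1 := by
    have : ((1:ℤ):ℝ) ≤ ((q - z - 1 : ℤ):ℝ) := by exact_mod_cast hB
    push_cast at this
    linarith
  have hrq : (0 : ℝ) < (q : ℝ) - 1 := by
    have : ((2:ℤ):ℝ) ≤ ((q - 1 : ℤ):ℝ) := by exact_mod_cast hq
    push_cast at this
    linarith
  -- integer division bounds
  have key : ∀ b : ℤ, 0 < b → (((q - 1) / b : ℤ) : ℝ) ≤ ((q : ℝ) - 1) / (b : ℝ) := by
    intro b hb
    have hbR : (0 : ℝ) < (b : ℝ) := by exact_mod_cast hb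
    rw [le_div_iff₀ hbR]
    have h := Int.ediv_mul_le (q - 1) (ne_of_gt hb)
    have : (((q-1)/b*b : ℤ):ℝ) ≤ ((q-1 : ℤ):ℝ) := by exact_mod_cast h
    push_cast at this
    linarith
  have hnn : ∀ b : ℤ, 0 < b → (0 : ℝ) ≤ (((q - 1) / b : ℤ) : ℝ) := by
    intro b hb
    have : (0 : ℤ) ≤ (q - 1) / b := Int.ediv_nonneg (by linarith) (le_of_lt hb)
    exact_mod_cast this
  have hbz : (0 : ℤ) < q - z := by linarith
  have hbz1 : (0 : ℤ) < q - z - 1 := by linarith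
  have h1 : (((q - 1) / (q - z) : ℤ) : ℝ) ^ t ≤ (((q : ℝ) - 1) / ((q : ℝ) - z)) ^ t :=
    pow_le_pow_left₀ (hnn _ hbz) (by have := key _ hbz; push_cast at this ⊢; linarith) t
  have h2 : (((q - 1) / (q - z - 1) : ℤ) : ℝ) ^ t ≤ (((q : ℝ) - 1) / ((q : ℝ) - z - 1)) ^ t :=
    pow_le_pow_left₀ (hnn _ hbz1) (by have := key _ hbz1; push_cast at this ⊢; linarith) t
  have hden : (0 : ℝ) < ((q : ℝ) - 1) ^ t + 1 := by positivity
  have hS : (0 : ℝ) < 1 / ((q : ℝ) - z) ^ t + 1 / ((q : ℝ) - z - 1) ^ t := by positivity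
  have hmain : (((q : ℝ) - 1) / ((q : ℝ) - z)) ^ t + (((q : ℝ) - 1) / ((q : ℝ) - z - 1)) ^ t
      = ((q : ℝ) - 1) ^ t * (1 / ((q : ℝ) - z) ^ t + 1 / ((q : ℝ) - z - 1) ^ t) := by
    rw [div_pow, div_pow]
    field_simp
  calc ((((q - 1) / (q - z) : ℤ) : ℝ) ^ t + (((q - 1) / (q - z - 1) : ℤ) : ℝ) ^ t) /
        (((q : ℝ) - 1) ^ t + 1)
      ≤ (((q : ℝ) - 1) ^ t * (1 / ((q : ℝ) - z) ^ t + 1 / ((q : ℝ) - z - 1) ^ t)) /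
        (((q : ℝ) - 1) ^ t + 1) := by
        apply div_le_div_of_nonneg_right ?_ hden.le |>.trans_eq rfl
        · rw [← hmain]; linarith
    _ < 1 / ((q : ℝ) - z) ^ t + 1 / ((q : ℝ) - z - 1) ^ t := by
        rw [div_lt_iff₀ hden]
        nlinarith [pow_pos hrq t]
end

section
/- Let q ≥ 2, m ≥ 1, 1 ≤ z < q be integers. Define an array C with rows indexed by a ∈ (Z_q)^m and columns indexed by b ∈ Z_q, where C(a,b) = * if Σ_{l=0}^{m-1} a_l ∈ {b, b+1, ..., b+(z−1)} (mod q), and otherwise C(a,b) = (a, b − Σ_{l=0}^{m-1} a_l − 1) with arithmetic mod q. Then: (1) each column of C contains exactly z·q^{m-1} stars; (2) no non-star value appears twice in the same row or twice in the same column of C; (3) if C(a,b) = C(a',b') are equal non-star values with (a,b) ≠ (a',b'), then C(a,b') = C(a',b) = *. In fact, any two distinct entries of C are never equal non-star values. -/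
/-- The array `C` of Construction 4: rows indexed by `a ∈ (Z_q)^m`, columns by
`b ∈ Z_q`; a star is encoded as `none`. -/
def arrayC (q z m : ℕ) [NeZero q] (a : Fin m → ZMod q) (b : ZMod q) :
    Option ((Fin m → ZMod q) × ZMod q) :=
  if ∃ i : Fin z, (∑ l, a l) = b + ((i : ℕ) : ZMod q) then none
  else some (a, b - (∑ l, a l) - 1)

lemma arrayC_some {q z m : ℕ} [NeZero q] {a : Fin m → ZMod q} {b : ZMod q}
    {v : (Fin m → ZMod q) × ZMod q} (h : arrayC q z m a b = some v) :
    v.1 = a ∧ v.2 = b - (∑ l, a l) - 1 := by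
  unfold arrayC at h
  split_ifs at h
  simp only [Option.some.injEq] at h
  subst h; exact ⟨rfl, rfl⟩

lemma fiber_card (q : ℕ) [NeZero q] (n : ℕ) (s : ZMod q) :
    (Finset.univ.filter (fun a : Fin (n+1) → ZMod q => ∑ l, a l = s)).card = q ^ n := by
  classical
  rw [show q ^ n = (Finset.univ : Finset (Fin n → ZMod q)).card by
    simp [ZMod.card]]
  apply Finset.card_bij' (fun a _ => a ∘ Fin.castSucc)
    (fun f _ => Fin.snoc f (s - ∑ l, f l))
  · intros; simp
  · intro f _
    simp [Finset.mem_filter, Fin.sum_univ_castSucc, Fin.snoc_last, Fin.snoc_castSucc]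
  · intro a ha
    simp only [Finset.mem_filter, Finset.mem_univ, true_and] at ha
    funext i
    induction i using Fin.lastCases with
    | last => simp [Fin.snoc_last, ← ha, Fin.sum_univ_castSucc]
    | cast j => simp [Fin.snoc_castSucc]
  · intro f _
    funext j
    simp [Fin.snoc_castSucc]

open Classical in
theorem arrayC_properties (q z m : ℕ) (hq : 2 ≤ q) (hm : 1 ≤ m) (hz : 1 ≤ z)
    (hzq : z < q) [NeZero q] :
    (∀ b : ZMod q,
        (Finset.univ.filter
          (fun a : Fin m → ZMod q => arrayC q z m a b = none)).card
          = z * q ^ (m - 1)) ∧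
      (∀ (a : Fin m → ZMod q) (b b' : ZMod q) (v : (Fin m → ZMod q) × ZMod q),
        arrayC q z m a b = some v → arrayC q z m a b' = some v → b = b') ∧
      (∀ (a a' : Fin m → ZMod q) (b : ZMod q) (v : (Fin m → ZMod q) × ZMod q),
        arrayC q z m a b = some v → arrayC q z m a' b = some v → a = a') ∧
      (∀ (a a' : Fin m → ZMod q) (b b' : ZMod q) (v : (Fin m → ZMod q) × ZMod q),
        (a, b) ≠ (a', b') → arrayC q z m a b = some v → arrayC q z m a' b' = some v →
        arrayC q z m a b' = none ∧ arrayC q z m a' b = none) ∧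
      (∀ (a a' : Fin m → ZMod q) (b b' : ZMod q) (v : (Fin m → ZMod q) × ZMod q),
        arrayC q z m a b = some v → arrayC q z m a' b' = some v → (a, b) = (a', b')) := by
  have key : ∀ (a a' : Fin m → ZMod q) (b b' : ZMod q) (v : (Fin m → ZMod q) × ZMod q),
      arrayC q z m a b = some v → arrayC q z m a' b' = some v → a = a' ∧ b = b' := by
    intro a a' b b' v h h'
    obtain ⟨h1, h2⟩ := arrayC_some h
    obtain ⟨h1', h2'⟩ := arrayC_some h'
    have ha : a = a' := h1 ▸ h1'
    refine ⟨ha, ?_⟩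
    have hb : b - (∑ l, a l) - 1 = b' - (∑ l, a l) - 1 := by
      rw [← h2, h2', ha]
    linear_combination hb
  refine ⟨?_, fun a b b' v h h' => (key a a b b' v h h').2,
    fun a a' b v h h' => (key a a' b b v h h').1,
    fun a a' b b' v hne h h' => absurd (by
      obtain ⟨h1, h2⟩ := key a a' b b' v h h'
      exact Prod.ext h1 h2) hne,
    fun a a' b b' v h h' => by
      obtain ⟨h1, h2⟩ := key a a' b b' v h h'
      exact Prod.ext h1 h2⟩
  intro b
  have : (Finset.univ.filter (fun a : Fin m → ZMod q => arrayC q z m a b = none))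
      = Finset.univ.filter (fun a : Fin m → ZMod q =>
          ∃ i : Fin z, (∑ l, a l) = b + ((i : ℕ) : ZMod q)) := by
    apply Finset.filter_congr
    intro a _
    unfold arrayC
    split_ifs with h <;> simp [h]
  rw [this]
  have : Finset.univ.filter (fun a : Fin m → ZMod q =>
      ∃ i : Fin z, (∑ l, a l) = b + ((i : ℕ) : ZMod q))
      = (Finset.univ : Finset (Fin z)).biUnion (fun i =>
          Finset.univ.filter (fun a : Fin m → ZMod q =>
            (∑ l, a l) = b + ((i : ℕ) : ZMod q))) := by
    ext a
    simp
  rw [this, Finset.card_biUnion]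
  · obtain ⟨n, rfl⟩ := Nat.exists_eq_succ_of_ne_zero (by omega : m ≠ 0)
    simp only [Nat.succ_eq_add_one, Nat.add_sub_cancel]
    simp only [fiber_card]
    simp [mul_comm]
  · intro i _ j _ hij
    apply Finset.disjoint_left.mpr
    intro a ha hb
    simp only [Finset.mem_filter, Finset.mem_univ, true_and] at ha hb
    apply hij
    have : ((i : ℕ) : ZMod q) = ((j : ℕ) : ZMod q) := by
      have := ha.symm.trans hb
      exact add_left_cancel this
    have hv : (i : ℕ) = (j : ℕ) := by
      have hi := ZMod.val_cast_of_lt (lt_trans i.isLt hzq)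
      have hj := ZMod.val_cast_of_lt (lt_trans j.isLt hzq)
      rw [← hi, ← hj, this]
    exact Fin.ext hv
end

section
/- Let q ≥ 2, m ≥ 1, 1 ≤ z < q be integers and set L = ⌊(q-1)/(q-z)⌋. Suppose a ∈ (Z_q)^m, ε ∈ {0,...,L-1}, b, b' ∈ Z_q, δ ∈ {0,...,m-1}, a' ∈ (Z_q)^m satisfy: a'_l = a_l for all l ≠ δ, a'_δ = b − ε(q−z) mod q, and a_δ − b − 1 ≡ b' − (Σ_{l=0}^{m-1} a'_l − ε(q−z)) − 1 (mod q). If moreover Σ_{l=0}^{m-1} a'_l − ε(q−z) ≡ b' − j (mod q) for some integer j with 1 ≤ j ≤ q−z, then Σ_{l=0}^{m-1} a_l − ε(q−z) mod q ∈ {b', b'+1, ..., b'+(z−1)} (mod q). -/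
theorem cross_entry_star (q z m : ℕ) (hq : 2 ≤ q) (hm : 1 ≤ m) (hz : 1 ≤ z)
    (hzq : z < q) [NeZero q]
    (a a' : Fin m → ZMod q) (ε : ℕ) (hε : ε < (q - 1) / (q - z))
    (b b' : ZMod q) (δ : Fin m)
    (h1 : ∀ l, l ≠ δ → a' l = a l)
    (h2 : a' δ = b - (ε : ZMod q) * ((q - z : ℕ) : ZMod q))
    (h3 : a δ - b - 1
        = b' - ((∑ l, a' l) - (ε : ZMod q) * ((q - z : ℕ) : ZMod q)) - 1)
    (h4 : ∃ j : ℕ, 1 ≤ j ∧ j ≤ q - z ∧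
        (∑ l, a' l) - (ε : ZMod q) * ((q - z : ℕ) : ZMod q) = b' - (j : ZMod q)) :
    ∃ i : Fin z,
      (∑ l, a l) - (ε : ZMod q) * ((q - z : ℕ) : ZMod q) = b' + ((i : ℕ) : ZMod q) := by
  obtain ⟨j, hj1, hj2, hS'⟩ := h4
  -- natural-number bound: ε * (q - z) ≤ z - 1
  have hwpos : 0 < q - z := Nat.sub_pos_of_lt hzq
  have hmul : (ε + 1) * (q - z) ≤ q - 1 := by
    calc (ε + 1) * (q - z) ≤ ((q - 1) / (q - z)) * (q - z) :=
          Nat.mul_le_mul_right _ hε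
      _ ≤ q - 1 := Nat.div_mul_le_self _ _
  have hbound : ε * (q - z) < z := by
    have : ε * (q - z) + (q - z) ≤ q - 1 := by
      simpa [Nat.add_mul, Nat.one_mul] using hmul
    omega
  refine ⟨⟨ε * (q - z), hbound⟩, ?_⟩
  -- sum difference
  have hsum : (∑ l, a l) - (∑ l, a' l) = a δ - a' δ := by
    rw [← Finset.sum_sub_distrib]
    rw [Finset.sum_eq_single δ]
    · intro c _ hc
      rw [h1 c hc]; ring
    · intro h; exact absurd (Finset.mem_univ δ) h
  have hcast : ((ε * (q - z) : ℕ) : ZMod q) = (ε : ZMod q) * ((q - z : ℕ) : ZMod q) := by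
    push_cast; ring
  simp only [hcast]
  have haδ : a δ - b = b' - ((∑ l, a' l) - (ε : ZMod q) * ((q - z : ℕ) : ZMod q)) := by
    linear_combination h3
  linear_combination hsum + haδ - h2
end

section
/- Let q ≥ 2, m ≥ 1, 1 ≤ z < q, 1 ≤ t < m be integers and set L = ⌊(q-1)/(q-z)⌋. For every tuple s = (s_0,...,s_{m-1}, s_m,...,s_{m+t-1}) with s_0,...,s_{m-1} ∈ Z_q and s_m,...,s_{m+t-1} ∈ {0,...,q-z-1}, and for every choice of indices 0 ≤ δ_0 < ... < δ_{t-1} < m and ε_0,...,ε_{t-1} ∈ {0,...,L-1}, there is exactly one pair (a, b) with a ∈ (Z_q)^m × {0,...,L-1}^t a row index and b ∈ (Z_q)^t × {(δ_0,...,δ_{t-1})} a column index of the array P of Construction 1 such that P(a,b) = s. Consequently each value s occurs exactly binomial(m,t)·L^t times in P. -/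
open Classical in
lemma pda_aux (q z m t : ℕ) [NeZero q] (hzq : z < q)
    (s1 : Fin m → ZMod q) (s2 : Fin t → ℕ) (hs2 : ∀ i, s2 i < q - z)
    (δ : Fin t → Fin m) (hδ : Function.Injective δ) (ε : Fin t → ℕ) :
    ∃! p : (Fin m → ZMod q) × (Fin t → ZMod q),
      (if ∃ i : Fin t, ∃ j : Fin z, p.1 (δ i) = p.2 i - ((j : ℕ) : ZMod q) then none
        else
          some (fun l =>
              if h : ∃ i, δ i = l then
                p.2 h.choose - ((ε h.choose : ℕ) : ZMod q) * ((q - z : ℕ) : ZMod q)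
              else p.1 l,
            fun i => (p.1 (δ i) - p.2 i - 1).val)) = some (s1, s2) := by
  have hchoose : ∀ (i : Fin t) (h : ∃ j, δ j = δ i), h.choose = i :=
    fun i h => hδ h.choose_spec
  set bb : Fin t → ZMod q := fun i => s1 (δ i) + ((ε i : ℕ) : ZMod q) * ((q - z : ℕ) : ZMod q)
    with hbb
  set aa : Fin m → ZMod q := fun l =>
    if h : ∃ i, δ i = l then bb h.choose + ((s2 h.choose : ℕ) : ZMod q) + 1 else s1 l with haa
  have haaδ : ∀ i, aa (δ i) = bb i + ((s2 i : ℕ) : ZMod q) + 1 := by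
    intro i
    have h : ∃ j, δ j = δ i := ⟨i, rfl⟩
    simp only [haa, dif_pos h, hchoose i h]
  have hnostar : ∀ (x y : ZMod q) (k : ℕ), k < q - z →
      x = y + (k : ZMod q) + 1 → ∀ j : Fin z, x ≠ y - ((j : ℕ) : ZMod q) := by
    intro x y k hk hx j hxy
    rw [hx] at hxy
    have h0 : ((k + 1 + (j : ℕ) : ℕ) : ZMod q) = 0 := by push_cast; linear_combination hxy
    rw [ZMod.natCast_eq_zero_iff] at h0
    have hlt : k + 1 + (j : ℕ) < q := by omega
    have := Nat.le_of_dvd (by omega) h0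
    omega
  refine ⟨(aa, bb), ?_, ?_⟩
  · have : ¬ ∃ i : Fin t, ∃ j : Fin z, aa (δ i) = bb i - ((j : ℕ) : ZMod q) := by
      rintro ⟨i, j, hij⟩
      exact hnostar _ _ _ (hs2 i) (haaδ i) j hij
    dsimp only
    rw [if_neg this]
    simp only [Option.some.injEq, Prod.mk.injEq]
    constructor
    · funext l
      by_cases h : ∃ i, δ i = l
      · rw [dif_pos h]
        have hl : δ h.choose = l := h.choose_spec
        rw [hbb]
        dsimp only
        rw [hl]
        ring
      · rw [dif_neg h, haa]
        simp only [dif_neg h]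
    · funext i
      have : aa (δ i) - bb i - 1 = ((s2 i : ℕ) : ZMod q) := by rw [haaδ i]; ring
      rw [this, ZMod.val_natCast_of_lt (by have := hs2 i; omega)]
  · rintro ⟨a, b⟩ hp
    dsimp only at hp
    by_cases hstar : ∃ i : Fin t, ∃ j : Fin z, a (δ i) = b i - ((j : ℕ) : ZMod q)
    · rw [if_pos hstar] at hp; exact absurd hp (by simp)
    rw [if_neg hstar] at hp
    simp only [Option.some.injEq, Prod.mk.injEq] at hp
    obtain ⟨h1, h2⟩ := hp
    have hb : b = bb := by
      funext i
      have := congrFun h1 (δ i)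
      have h : ∃ j, δ j = δ i := ⟨i, rfl⟩
      rw [dif_pos h, hchoose i h] at this
      rw [hbb]
      simp only
      linear_combination this
    have ha : a = aa := by
      funext l
      by_cases h : ∃ i, δ i = l
      · obtain ⟨i, rfl⟩ := h
        have := congrFun h2 i
        have h3 : a (δ i) - b i - 1 = ((s2 i : ℕ) : ZMod q) := by
          have := congrArg (fun x : ℕ => (x : ZMod q)) this
          simpa [ZMod.natCast_val, ZMod.cast_id] using this
        rw [haaδ i, ← hb]
        linear_combination h3
      · have := congrFun h1 l
        rw [dif_neg h] at this
        rw [haa]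
        simp only [dif_neg h]
        exact this
    rw [ha, hb]

/-- The array `P` of Construction 1: rows indexed by `(a, ε)`, columns by `(b, δ)`
(with `δ` strictly increasing); a star is encoded as `none`.  A non-star entry is the
vector obtained from `a` by replacing each `a_{δ i}` with `b i − ε i (q−z)`, together
with the appended coordinates `a_{δ i} − b i − 1` (represented in `{0,…,q−z−1}`). -/
noncomputable def pdaGen (q z m t : ℕ) [NeZero q] (a : Fin m → ZMod q)
    (ε : Fin t → ℕ) (b : Fin t → ZMod q) (δ : Fin t → Fin m) :
    Option ((Fin m → ZMod q) × (Fin t → ℕ)) :=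
  if ∃ i : Fin t, ∃ j : Fin z, a (δ i) = b i - ((j : ℕ) : ZMod q) then none
  else
    some (fun l =>
        if h : ∃ i, δ i = l then
          b h.choose - ((ε h.choose : ℕ) : ZMod q) * ((q - z : ℕ) : ZMod q)
        else a l,
      fun i => (a (δ i) - b i - 1).val)

lemma pdaGen_unique (q z m t : ℕ) [NeZero q] (hzq : z < q)
    (s1 : Fin m → ZMod q) (s2 : Fin t → ℕ) (hs2 : ∀ i, s2 i < q - z)
    (δ : Fin t → Fin m) (hδ : Function.Injective δ) (ε : Fin t → ℕ) :
    ∃! p : (Fin m → ZMod q) × (Fin t → ZMod q),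
      pdaGen q z m t p.1 ε p.2 δ = some (s1, s2) :=
  pda_aux q z m t hzq s1 s2 hs2 δ hδ ε

open Classical in
theorem pdaGen_unique_occurrence (q z m t : ℕ) (hq : 2 ≤ q) (hz : 1 ≤ z)
    (hzq : z < q) (ht : 1 ≤ t) (htm : t < m) [NeZero q]
    (s1 : Fin m → ZMod q) (s2 : Fin t → ℕ) (hs2 : ∀ i, s2 i < q - z) :
    (∀ δ : Fin t → Fin m, StrictMono δ →
      ∀ ε : Fin t → Fin ((q - 1) / (q - z)),
        ∃! p : (Fin m → ZMod q) × (Fin t → ZMod q),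
          pdaGen q z m t p.1 (fun i => (ε i : ℕ)) p.2 δ = some (s1, s2)) ∧
      (Finset.univ.filter
        (fun x : ((Fin m → ZMod q) × (Fin t → Fin ((q - 1) / (q - z)))) ×
            ((Fin t → ZMod q) × (Fin t → Fin m)) =>
          StrictMono x.2.2 ∧
            pdaGen q z m t x.1.1 (fun i => (x.1.2 i : ℕ)) x.2.1 x.2.2
              = some (s1, s2))).card
        = m.choose t * ((q - 1) / (q - z)) ^ t := by
  constructor
  · intro δ hδ ε
    exact pdaGen_unique q z m t hzq s1 s2 hs2 δ hδ.injective _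
  · have hbij :
        (Finset.univ.filter
          (fun x : ((Fin m → ZMod q) × (Fin t → Fin ((q - 1) / (q - z)))) ×
              ((Fin t → ZMod q) × (Fin t → Fin m)) =>
            StrictMono x.2.2 ∧
              pdaGen q z m t x.1.1 (fun i => (x.1.2 i : ℕ)) x.2.1 x.2.2
                = some (s1, s2))).card
          = (Finset.powersetCard t (Finset.univ : Finset (Fin m)) ×ˢ
              (Finset.univ : Finset (Fin t → Fin ((q - 1) / (q - z))))).card := by
      apply Finset.card_bij (fun x _ => (Finset.image x.2.2 Finset.univ, x.1.2))
      · intro x hx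
        simp only [Finset.mem_filter] at hx
        refine Finset.mem_product.2 ⟨Finset.mem_powersetCard_univ.2 ?_, Finset.mem_univ _⟩
        rw [Finset.card_image_of_injective _ hx.2.1.injective, Finset.card_univ,
          Fintype.card_fin]
      · intro x hx y hy hxy
        simp only [Finset.mem_filter] at hx hy
        simp only [Prod.mk.injEq] at hxy
        have hrange : Set.range x.2.2 = Set.range y.2.2 := by
          rw [← Set.image_univ, ← Finset.coe_univ, ← Finset.coe_image, hxy.1,
            Finset.coe_image, Finset.coe_univ, Set.image_univ]
        haveI : WellFoundedLT (Fin t) := inferInstance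
        have hδeq : x.2.2 = y.2.2 :=
          (StrictMono.range_inj (β := Fin t) (γ := Fin m) hx.2.1 hy.2.1).mp hrange
        have hεeq : x.1.2 = y.1.2 := hxy.2
        have h1 := hx.2.2
        have h2 := hy.2.2
        rw [← hδeq, ← hεeq] at h2
        have huniq := pdaGen_unique q z m t hzq s1 s2 hs2 x.2.2 hx.2.1.injective
          (fun i => (x.1.2 i : ℕ))
        have heq : ((x.1.1, x.2.1) : (Fin m → ZMod q) × (Fin t → ZMod q))
            = (y.1.1, y.2.1) := huniq.unique h1 h2
        have ha : x.1.1 = y.1.1 := (Prod.ext_iff.mp heq).1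
        have hb : x.2.1 = y.2.1 := (Prod.ext_iff.mp heq).2
        exact Prod.ext (Prod.ext ha hεeq) (Prod.ext hb hδeq)
      · rintro ⟨S0, ε⟩ hmem
        rw [Finset.mem_product] at hmem
        have hcard : S0.card = t := (Finset.mem_powersetCard_univ.1 hmem.1)
        set δf : Fin t → Fin m := fun i => S0.orderEmbOfFin hcard i with hδf
        have hmono : StrictMono δf := (S0.orderEmbOfFin hcard).strictMono
        obtain ⟨p, hp, -⟩ := pdaGen_unique q z m t hzq s1 s2 hs2 δf hmono.injective
          (fun i => (ε i : ℕ))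
        refine ⟨((p.1, ε), (p.2, δf)), Finset.mem_filter.2 ⟨Finset.mem_univ _, hmono, hp⟩, ?_⟩
        have himg : Finset.image δf Finset.univ = S0 := by
          apply Finset.coe_injective
          rw [Finset.coe_image, Finset.coe_univ, Set.image_univ]
          exact Finset.range_orderEmbOfFin S0 hcard
        simp [himg]
    rw [hbij, Finset.card_product, Finset.card_powersetCard, Finset.card_univ,
      Finset.card_univ, Fintype.card_fin, Fintype.card_fun]
    simp [Fintype.card_fin]
end
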